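/- arXiv:2109.06291 — 4 statements merged into one kernel-verified Lean document; each statement's English description precedes it below -/
import Mathlib

section
/- Let n be a natural number and y > z > 1 be real. Then n can be factored as n = m · n_1 ··· n_r where m is the z-rough part of n (the product of prime powers p^a || n with p > z), each n_i is z-smooth and satisfies n_i ≤ y, and r ≤ 1 + (log n)/(log(y/z)). Moreover m is a product of at most (log n)/(log z) primes (counted with multiplicity). -/
open Finset

/-!
Split `n = m * s` into its `z`-rough part `m` and its `z`-smooth part `s`. Every prime factor
of `m` exceeds `z`, so `z ^ Ω(m) ≤ m ≤ n`. A `z`-smooth `s > y` has a divisor in `(y / z, y]`: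
strip prime factors (each `≤ z`) off `s` until what is left is at most `y`. Splitting off such
divisors repeatedly writes `s` as a product of `r` factors `≤ y`, all but the last exceeding
`y / z`, whence `(y / z) ^ (r - 1) ≤ s ≤ n`.
-/

theorem List.pow_length_le_prod_of_nonneg {R : Type*} [CommSemiring R] [PartialOrder R]
    [IsOrderedRing R] {a : R} (ha : 0 ≤ a) {l : List R} (h : ∀ x ∈ l, a ≤ x) :
    a ^ l.length ≤ l.prod := by
  induction l with
  | nil => simp
  | cons x l ih =>
    rw [List.length_cons, List.prod_cons, pow_succ']
    have hl := ih fun b hb => h b (List.mem_cons_of_mem _ hb)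
    have hx := h x List.mem_cons_self
    exact mul_le_mul hx hl (pow_nonneg ha _) (ha.trans hx)

theorem Nat.pow_primeFactorsList_length_le {m : ℕ} (hm : m ≠ 0) {z : ℝ} (hz : 0 ≤ z)
    (h : ∀ p ∈ m.primeFactors, z ≤ p) : z ^ m.primeFactorsList.length ≤ m := by
  have key := List.pow_length_le_prod_of_nonneg hz (l := m.primeFactorsList.map (↑))
    (by
      simp only [List.mem_map]
      rintro _ ⟨p, hp, rfl⟩
      exact h p (Nat.mem_primeFactors_iff_mem_primeFactorsList.2 hp))
  rwa [List.length_map, ← Nat.cast_list_prod, Nat.prod_primeFactorsList hm] at key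

theorem Nat.prod_filter_pow_factorization_mul_prod_filter_not {n : ℕ} (hn : n ≠ 0)
    (P : ℕ → Prop) [DecidablePred P] :
    (∏ p ∈ n.primeFactors.filter P, p ^ n.factorization p) *
      ∏ p ∈ n.primeFactors.filter (¬P ·), p ^ n.factorization p = n := by
  rw [prod_filter_mul_prod_filter_not, ← Nat.support_factorization]
  exact Nat.prod_factorization_pow_eq_self hn

theorem Nat.of_mem_primeFactors_prod_filter_pow {n q : ℕ} (P : ℕ → Prop) [DecidablePred P]
    (f : ℕ → ℕ) (hq : q ∈ (∏ p ∈ n.primeFactors.filter P, p ^ f p).primeFactors) : P q := by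
  obtain ⟨hq, hqd, -⟩ := Nat.mem_primeFactors.1 hq
  obtain ⟨p, hp, hqp⟩ := hq.prime.exists_mem_finset_dvd hqd
  obtain ⟨hpn, hPp⟩ := mem_filter.1 hp
  rwa [(Nat.prime_dvd_prime_iff_eq hq (Nat.prime_of_mem_primeFactors hpn)).1
    (hq.dvd_of_dvd_pow hqp)]

theorem natCast_le_log_div_log_of_pow_le {b x : ℝ} {k : ℕ} (hb : 1 < b) (h : b ^ k ≤ x) :
    (k : ℝ) ≤ Real.log x / Real.log b := by
  rw [le_div_iff₀ (Real.log_pos hb), ← Real.log_pow]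
  exact Real.log_le_log (by positivity) h

theorem exists_dvd_mem_Ioc_of_smooth {y z : ℝ} (hz : 0 < z) (hy : 1 ≤ y) (s : ℕ)
    (hs : ∀ q ∈ s.primeFactors, (q : ℝ) ≤ z) (hzs : y / z < s) :
    ∃ d, d ∣ s ∧ y / z < d ∧ (d : ℝ) ≤ y := by
  induction s using Nat.strong_induction_on with
  | _ s ih =>
  by_cases hsy : (s : ℝ) ≤ y
  · exact ⟨s, dvd_rfl, hzs, hsy⟩
  have hs1 : s ≠ 1 := by rintro rfl; push_cast at hsy; linarith
  have hs0 : s ≠ 0 := by rintro rfl; push_cast at hsy; linarith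
  set p := s.minFac
  have hp : p.Prime := Nat.minFac_prime hs1
  have hpz : (p : ℝ) ≤ z := hs p (Nat.mem_primeFactors.2 ⟨hp, Nat.minFac_dvd s, hs0⟩)
  obtain ⟨t, hst⟩ : p ∣ s := Nat.minFac_dvd s
  have hts : t ∣ s := Dvd.intro_left _ hst.symm
  have hlt : t < s := by
    have := hp.two_le
    have : 0 < t := Nat.pos_of_ne_zero (by rintro rfl; rw [mul_zero] at hst; exact hs0 hst)
    nlinarith
  have hzt : y / z < t := by
    rw [div_lt_iff₀ hz]
    calc y < s := not_le.1 hsy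
      _ = t * p := by rw [mul_comm]; exact_mod_cast hst
      _ ≤ t * z := by gcongr
  obtain ⟨d, hdt, hd⟩ := ih t hlt (fun q hq => hs q (Nat.primeFactors_mono hts hs0 hq)) hzt
  exact ⟨d, hdt.trans hts, hd⟩

theorem exists_factors_le_of_smooth {y z : ℝ} (hz : 1 ≤ z) (hzy : z ≤ y) (s : ℕ) (hs0 : s ≠ 0)
    (hs : ∀ q ∈ s.primeFactors, (q : ℝ) ≤ z) :
    ∃ (r : ℕ) (ns : Fin r → ℕ), s = ∏ i, ns i ∧ (∀ i, ns i ∣ s ∧ (ns i : ℝ) ≤ y) ∧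
      (y / z) ^ r ≤ y / z * s := by
  induction s using Nat.strong_induction_on with
  | _ s ih =>
  have hyz : 1 ≤ y / z := (one_le_div (by linarith)).2 hzy
  have hs1 : (1 : ℝ) ≤ s := by exact_mod_cast Nat.one_le_iff_ne_zero.2 hs0
  by_cases hsy : (s : ℝ) ≤ y
  · refine ⟨1, fun _ => s, by simp, fun _ => ⟨dvd_rfl, hsy⟩, ?_⟩
    rw [pow_one]
    exact le_mul_of_one_le_right (by linarith) hs1
  have hzs : y / z < s := lt_of_le_of_lt (div_le_self (by linarith) hz) (not_le.1 hsy)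
  obtain ⟨d, ⟨t, hst⟩, hzd, hdy⟩ :=
    exists_dvd_mem_Ioc_of_smooth (by linarith) (by linarith) s hs hzs
  have hts : t ∣ s := Dvd.intro_left _ hst.symm
  have ht0 : t ≠ 0 := by rintro rfl; rw [mul_zero] at hst; exact hs0 hst
  have hlt : t < s := by
    have : 1 < d := by exact_mod_cast hyz.trans_lt hzd
    have : 0 < t := Nat.pos_of_ne_zero ht0
    nlinarith
  obtain ⟨r, ns, hprod, hns, hpow⟩ :=
    ih t hlt ht0 (fun q hq => hs q (Nat.primeFactors_mono hts hs0 hq))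
  refine ⟨r + 1, Fin.cons d ns, by rw [Fin.prod_cons, ← hprod, hst], ?_, ?_⟩
  · refine Fin.cases ⟨Dvd.intro _ hst.symm, hdy⟩ fun i => ?_
    simpa using ⟨(hns i).1.trans hts, (hns i).2⟩
  · calc (y / z) ^ (r + 1) = (y / z) ^ r * (y / z) := pow_succ _ _
      _ ≤ (y / z * t) * d := by gcongr
      _ = y / z * s := by rw [hst]; push_cast; ring

/-- Landreau-type factorization: `n = n_{(>z)} · n_1 ⋯ n_r` with each `n_i` a `z`-smooth
number at most `y`, `r ≤ 1 + log_{y/z} n`, and the `z`-rough part `n_{(>z)}` a product of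
at most `log_z n` primes (with multiplicity). -/
theorem stmt2 (n : ℕ) (hn : 1 ≤ n) (y z : ℝ) (hz : 1 < z) (hy : z < y) :
    ∃ (r : ℕ) (ns : Fin r → ℕ),
      n = (∏ p ∈ n.primeFactors.filter (fun p : ℕ => z < (p : ℝ)), p ^ n.factorization p)
            * ∏ i : Fin r, ns i ∧
      (∀ i : Fin r, (ns i : ℝ) ≤ y ∧ ∀ q ∈ (ns i).primeFactors, (q : ℝ) ≤ z) ∧
      (r : ℝ) ≤ 1 + Real.log n / Real.log (y / z) ∧
      (((∏ p ∈ n.primeFactors.filter (fun p : ℕ => z < (p : ℝ)),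
          p ^ n.factorization p).primeFactorsList.length : ℝ))
        ≤ Real.log n / Real.log z := by
  have hn0 : n ≠ 0 := Nat.one_le_iff_ne_zero.1 hn
  set m := ∏ p ∈ n.primeFactors.filter (fun p : ℕ => z < (p : ℝ)), p ^ n.factorization p
  set s := ∏ p ∈ n.primeFactors.filter (fun p : ℕ => ¬z < (p : ℝ)), p ^ n.factorization p
  have hms : m * s = n := Nat.prod_filter_pow_factorization_mul_prod_filter_not hn0 _
  have hmn : (m : ℝ) ≤ n := by exact_mod_cast Nat.le_of_dvd (by omega) ⟨s, hms.symm⟩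
  have hsn : (s : ℝ) ≤ n := by
    exact_mod_cast Nat.le_of_dvd (by omega) ⟨m, by rw [← hms, mul_comm]⟩
  have hm0 : m ≠ 0 := left_ne_zero_of_mul (hms ▸ hn0)
  have hs0 : s ≠ 0 := right_ne_zero_of_mul (hms ▸ hn0)
  have hm_rough : ∀ q ∈ m.primeFactors, z ≤ q := fun q hq =>
    (Nat.of_mem_primeFactors_prod_filter_pow _ _ hq).le
  have hs_smooth : ∀ q ∈ s.primeFactors, (q : ℝ) ≤ z := fun q hq =>
    not_lt.1 (Nat.of_mem_primeFactors_prod_filter_pow _ _ hq)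
  obtain ⟨r, ns, hprod, hns, hpow⟩ := exists_factors_le_of_smooth hz.le hy.le s hs0 hs_smooth
  have hyz : 1 < y / z := (one_lt_div (by linarith)).2 hy
  have hr : (r : ℝ) ≤ Real.log (y / z * n) / Real.log (y / z) :=
    natCast_le_log_div_log_of_pow_le hyz (hpow.trans (by gcongr))
  refine ⟨r, ns, by rw [← hprod, hms], fun i => ⟨(hns i).2, fun q hq =>
    hs_smooth q (Nat.primeFactors_mono (hns i).1 hs0 hq)⟩, ?_, ?_⟩
  · rwa [Real.log_mul (by positivity) (by positivity), add_div,
      div_self (Real.log_pos hyz).ne'] at hr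
  · exact natCast_le_log_div_log_of_pow_le hz
      ((Nat.pow_primeFactorsList_length_le hm0 (by linarith) hm_rough).trans hmn)
end

section
/- For every ε > 0 there exist constants C_ε, A_ε > 0 such that for all natural numbers n ≥ 1, τ(n) ≤ C_ε · ∑_{d | n, d ≤ n^ε} τ(d)^{A_ε}, where τ is the number-of-divisors function. -/
/-!
Put `Y = n^ε`. For `k > Y`, let `e` be the largest divisor of `k` with `e ≤ Y` and `p` a prime
dividing `k / e`; maximality of `e` gives `e p > Y`. Hence `k = e p k'` with `k' < k / Y` and
`τ(k) ≤ 2 τ(e) τ(k')`. Iterating, `n` is used up after at most `⌈1/ε⌉` steps, so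
`τ(n) ≤ (2 τ(d))^⌈1/ε⌉`, where `d ≤ n^ε` is the factor `e` of largest `τ` met along the way.
-/

open Finset

theorem Nat.card_divisors_mul_le (m n : ℕ) :
    #(m * n).divisors ≤ #m.divisors * #n.divisors := by
  rw [Nat.divisors_mul]
  exact card_mul_le

theorem Nat.exists_eq_mul_prime_mul_of_lt {Y : ℝ} (hY : 1 ≤ Y) {k : ℕ} (hk : k ≠ 0)
    (hkY : Y < k) :
    ∃ e p k', p.Prime ∧ k = e * p * k' ∧ (e : ℝ) ≤ Y ∧ Y < (e * p : ℕ) := by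
  have h1 : 1 ∈ k.divisors.filter (fun d : ℕ => (d : ℝ) ≤ Y) := by simpa [hk] using hY
  obtain ⟨e, he, he_max⟩ := exists_max_image _ id ⟨1, h1⟩
  simp only [mem_filter, Nat.mem_divisors, id] at he he_max
  obtain ⟨⟨he_dvd, -⟩, heY⟩ := he
  have he_pos : 0 < e := Nat.pos_of_dvd_of_pos he_dvd (Nat.pos_of_ne_zero hk)
  have hquot : k / e ≠ 1 := by
    intro h
    rw [Nat.div_eq_iff_eq_mul_left he_pos he_dvd, one_mul] at h
    subst h
    linarith
  obtain ⟨p, hp, hp_dvd⟩ := Nat.exists_prime_and_dvd hquot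
  have hep_dvd : e * p ∣ k := Nat.mul_dvd_of_dvd_div he_dvd hp_dvd
  obtain ⟨k', rfl⟩ := hep_dvd
  refine ⟨e, p, k', hp, rfl, heY, ?_⟩
  by_contra! hep
  have := he_max (e * p) ⟨⟨dvd_mul_right _ _, hk⟩, hep⟩
  nlinarith [hp.two_le]

theorem Nat.exists_dvd_le_card_divisors_le_pow {Y : ℝ} (hY : 1 ≤ Y) (t : ℕ) {k : ℕ}
    (hk : k ≠ 0) (hkY : (k : ℝ) ≤ Y ^ t) :
    ∃ d ∈ k.divisors, (d : ℝ) ≤ Y ∧ #k.divisors ≤ (2 * #d.divisors) ^ t := by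
  induction k using Nat.strong_induction_on generalizing t with
  | _ k ih =>
  rcases t with _ | s
  · obtain rfl : k = 1 := by
      have : k ≤ 1 := by exact_mod_cast (pow_zero Y ▸ hkY)
      omega
    exact ⟨1, by simp, by simpa using hY, by simp⟩
  rcases le_or_gt (k : ℝ) Y with hkle | hklt
  · exact ⟨k, Nat.mem_divisors_self k hk, hkle, by
      calc #k.divisors ≤ 2 * #k.divisors := by omega
        _ ≤ (2 * #k.divisors) ^ (s + 1) := Nat.le_self_pow s.succ_ne_zero _⟩
  obtain ⟨e, p, k', hp, rfl, heY, hepY⟩ := Nat.exists_eq_mul_prime_mul_of_lt hY hk hklt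
  have hk' : k' ≠ 0 := right_ne_zero_of_mul hk
  have hk'Y : (k' : ℝ) ≤ Y ^ s := by
    have : (k' : ℝ) * Y < k' * (e * p : ℕ) :=
      mul_lt_mul_of_pos_left hepY (by exact_mod_cast Nat.pos_of_ne_zero hk')
    rw [pow_succ] at hkY
    push_cast at this hkY
    nlinarith [pow_pos (zero_lt_one.trans_le hY) s]
  have hk'lt : k' < e * p * k' :=
    lt_mul_left (Nat.pos_of_ne_zero hk') (by exact_mod_cast hY.trans_lt hepY)
  obtain ⟨d', hd', hd'Y, hk'τ⟩ := ih k' hk'lt s hk' hk'Y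
  have hτ : #(e * p * k').divisors ≤ 2 * #e.divisors * #k'.divisors :=
    calc #(e * p * k').divisors ≤ #e.divisors * #p.divisors * #k'.divisors :=
          (Nat.card_divisors_mul_le _ _).trans
            (Nat.mul_le_mul_right _ (Nat.card_divisors_mul_le _ _))
      _ = 2 * #e.divisors * #k'.divisors := by
          rw [hp.divisors, card_pair hp.one_lt.ne, mul_comm #e.divisors]
  have he_dvd : e ∈ (e * p * k').divisors :=
    Nat.mem_divisors.2 ⟨Dvd.intro _ (mul_assoc _ _ _).symm, hk⟩
  have hd'_dvd : d' ∈ (e * p * k').divisors :=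
    Nat.mem_divisors.2 ⟨(Nat.dvd_of_mem_divisors hd').trans (dvd_mul_left _ _), hk⟩
  rcases le_total #e.divisors #d'.divisors with hle | hle
  · refine ⟨d', hd'_dvd, hd'Y, hτ.trans ?_⟩
    rw [pow_succ']
    exact Nat.mul_le_mul (by omega) hk'τ
  · refine ⟨e, he_dvd, heY, hτ.trans ?_⟩
    rw [pow_succ']
    exact Nat.mul_le_mul le_rfl (hk'τ.trans (by gcongr))

/-- Landreau's inequality: for every `ε > 0` there are constants `C_ε, A_ε > 0` with
`τ(n) ≤ C_ε ∑_{d ∣ n, d ≤ n^ε} τ(d)^{A_ε}` for all `n ≥ 1`. -/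
theorem stmt3 (ε : ℝ) (hε : 0 < ε) :
    ∃ C A : ℝ, 0 < C ∧ 0 < A ∧ ∀ n : ℕ, 1 ≤ n →
      (n.divisors.card : ℝ) ≤
        C * ∑ d ∈ n.divisors.filter (fun d : ℕ => (d : ℝ) ≤ (n : ℝ) ^ ε),
              (d.divisors.card : ℝ) ^ A := by
  set t := ⌈1 / ε⌉₊
  have ht : 0 < t := Nat.ceil_pos.2 (by positivity)
  refine ⟨2 ^ t, t, by positivity, by exact_mod_cast ht, fun n hn => ?_⟩
  have hn1 : (1 : ℝ) ≤ n := by exact_mod_cast hn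
  have hnY : (n : ℝ) ≤ ((n : ℝ) ^ ε) ^ t := by
    rw [← Real.rpow_mul_natCast (by positivity)]
    refine Real.self_le_rpow_of_one_le hn1 ?_
    calc (1 : ℝ) = ε * (1 / ε) := by field_simp
      _ ≤ ε * t := by gcongr; exact Nat.le_ceil _
  obtain ⟨d, hd, hdY, hτ⟩ := Nat.exists_dvd_le_card_divisors_le_pow
    (Real.one_le_rpow hn1 hε.le) t (by omega) hnY
  calc (#n.divisors : ℝ) ≤ ((2 * #d.divisors) ^ t : ℕ) := by exact_mod_cast hτ
    _ = 2 ^ t * (#d.divisors : ℝ) ^ (t : ℝ) := by push_cast; rw [Real.rpow_natCast, mul_pow]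
    _ ≤ 2 ^ t * ∑ d ∈ n.divisors.filter (fun d : ℕ => (d : ℝ) ≤ (n : ℝ) ^ ε),
          (#d.divisors : ℝ) ^ (t : ℝ) := by
      gcongr
      exact single_le_sum (f := fun d : ℕ => (#d.divisors : ℝ) ^ (t : ℝ))
        (fun _ _ => by positivity) (mem_filter.2 ⟨hd, hdY⟩)
end

section
/- There exists a constant C > 0 such that for all σ > 0 and all real R, z ≥ 2, ∑_{p ≤ z, p prime} min(σ·(log p)/(log R), 1)/p ≤ C · log(1 + σ·(log z)/(log R)). -/
/-!
Put `t = σ / log R` and `n = ⌊z⌋`. For a prime `p`, `min (t log p) 1 / p = w p · (log p / p)`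
with the non-increasing weight `w x = min t (1 / log x)`. Mertens' estimate
`∑_{p ≤ x} log p / p ≤ log x + log 4 ≤ 3 log x` (from `∑_{p ≤ n} log p ⌊n / p⌋ ≤ log n!` and
Chebyshev's bound `θ n ≤ n log 4`) lets Abel summation trade the weights `log p / p` for the
increments `3 (log i - log (i - 1))`. Finally
`min t (1 / b) (b - a) ≤ 2 (log (1 + t b) - log (1 + t a))` for `0 ≤ a ≤ b`,
so the resulting sum telescopes to at most `6 log (1 + t log n)`.
-/

open Nat hiding log log_pow
open Finset Real

theorem sum_log_primeFactors_le_log (m : ℕ) : ∑ p ∈ m.primeFactors, log p ≤ log m := by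
  rcases eq_or_ne m 0 with rfl | hm
  · simp
  rw [← log_prod fun p hp ↦ mod_cast (prime_of_mem_primeFactors hp).ne_zero]
  gcongr
  · exact prod_pos fun p hp ↦ mod_cast (prime_of_mem_primeFactors hp).pos
  · rw [← cast_prod]
    exact_mod_cast Nat.le_of_dvd (Nat.pos_of_ne_zero hm) (prod_primeFactors_dvd m)

theorem sum_primesLE_log_mul_div_le_log_factorial (n : ℕ) :
    ∑ p ∈ primesLE n, log p * ↑(n / p) ≤ log n ! := by
  have hcount (p : ℕ) :
      log p * ↑(n / p) = ∑ e ∈ range n, if p ∣ e + 1 then log p else 0 := by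
    rw [← sum_filter, sum_const, card_multiples, nsmul_eq_mul, mul_comm]
  have hfact : log n ! = ∑ e ∈ range n, log ↑(e + 1) := by
    rw [← prod_range_add_one_eq_factorial, cast_prod, log_prod fun e _ ↦ by positivity]
  simp_rw [hcount, hfact]
  rw [sum_comm]
  refine sum_le_sum fun e _ ↦ ?_
  rw [← sum_filter]
  refine le_trans (sum_le_sum_of_subset_of_nonneg ?_ fun p _ _ ↦ log_natCast_nonneg p)
    (sum_log_primeFactors_le_log (e + 1))
  intro p hp
  simp only [mem_filter, primesLE_eq_filter_range] at hp
  exact mem_primeFactors.2 ⟨hp.1.2, hp.2, succ_ne_zero e⟩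

theorem sum_primesLE_log_div_le (n : ℕ) : ∑ p ∈ primesLE n, log p / p ≤ log n + log 4 := by
  rcases eq_or_ne n 0 with rfl | hn
  · simp only [primesLE_zero, sum_empty, cast_zero, log_zero, zero_add]
    positivity
  have hn' : (0 : ℝ) < n := by positivity
  have hdiv (p : ℕ) : (n : ℝ) / p ≤ ↑(n / p) + 1 := by
    rw [← floor_div_eq_div (K := ℝ)]
    exact (lt_floor_add_one _).le
  have htheta := Chebyshev.theta_le_log4_mul_x (Nat.cast_nonneg n)
  rw [Chebyshev.theta_eq_sum_primesLE_log] at htheta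
  have hfact : log n ! ≤ n * log n := by
    rw [← log_pow]
    gcongr
    exact_mod_cast factorial_le_pow n
  rw [← mul_le_mul_iff_of_pos_left hn', mul_sum]
  calc ∑ p ∈ primesLE n, n * (log p / p) = ∑ p ∈ primesLE n, log p * (n / p) := by
        refine sum_congr rfl fun p _ ↦ ?_
        ring
    _ ≤ ∑ p ∈ primesLE n, (log p * ↑(n / p) + log p) := by
        refine sum_le_sum fun p _ ↦ ?_
        have h := mul_le_mul_of_nonneg_left (hdiv p) (log_natCast_nonneg p)
        linarith
    _ ≤ n * (log n + log 4) := by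
        rw [sum_add_distrib]
        linarith [sum_primesLE_log_mul_div_le_log_factorial n]

theorem sum_primesLE_log_div_le_three_mul_log (n : ℕ) :
    ∑ p ∈ primesLE n, log p / p ≤ 3 * log n := by
  rcases lt_or_ge n 2 with hn | hn
  · interval_cases n <;> simp [primesLE_zero, primesLE_one]
  have hlog4 : log 4 ≤ 2 * log n := by
    rw [show (4 : ℝ) = 2 ^ 2 by norm_num, log_pow, Nat.cast_ofNat]
    gcongr
    exact_mod_cast hn
  linarith [sum_primesLE_log_div_le n]

theorem sum_mul_le_sum_mul_of_antitone {R : Type*} [CommRing R] [LinearOrder R]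
    [IsStrictOrderedRing R] {w a b : ℕ → R} {n : ℕ} (hw : Antitone w) (hwn : 0 ≤ w n)
    (hab : ∀ k ≤ n, ∑ i ∈ range k, a i ≤ ∑ i ∈ range k, b i) :
    ∑ i ∈ range n, w i * a i ≤ ∑ i ∈ range n, w i * b i := by
  have hpart (k : ℕ) (hk : k ≤ n) : 0 ≤ ∑ i ∈ range k, (b i - a i) := by
    rw [sum_sub_distrib, sub_nonneg]
    exact hab k hk
  have key (k : ℕ) (hk : k ≤ n) :
      w k * ∑ i ∈ range k, (b i - a i) ≤ ∑ i ∈ range k, w i * (b i - a i) := by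
    induction k with
    | zero => simp
    | succ k ih =>
      calc w (k + 1) * ∑ i ∈ range (k + 1), (b i - a i)
          ≤ w k * ∑ i ∈ range (k + 1), (b i - a i) :=
            mul_le_mul_of_nonneg_right (hw k.le_succ) (hpart _ hk)
        _ = w k * ∑ i ∈ range k, (b i - a i) + w k * (b k - a k) := by
            rw [sum_range_succ, mul_add]
        _ ≤ ∑ i ∈ range k, w i * (b i - a i) + w k * (b k - a k) := by
            gcongr
            exact ih (by omega)
        _ = ∑ i ∈ range (k + 1), w i * (b i - a i) := (sum_range_succ _ _).symm
  have h := (mul_nonneg hwn (hpart n le_rfl)).trans (key n le_rfl)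
  simpa only [mul_sub, sum_sub_distrib, sub_nonneg] using h

theorem min_le_two_mul_div_one_add {x : ℝ} (hx : 0 ≤ x) : min x 1 ≤ 2 * x / (1 + x) := by
  rw [le_div_iff₀ (by positivity)]
  rcases le_total x 1 with h | h
  · rw [min_eq_left h]; nlinarith
  · rw [min_eq_right h]; linarith

theorem min_mul_sub_le_two_mul_log_sub {t a b : ℝ} (ht : 0 ≤ t) (ha : 0 ≤ a) (hab : a ≤ b) :
    min t b⁻¹ * (b - a) ≤ 2 * (log (1 + t * b) - log (1 + t * a)) := by
  rcases (ha.trans hab).eq_or_lt with rfl | hb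
  · obtain rfl : a = 0 := le_antisymm hab ha
    simp
  have hta : 0 < 1 + t * a := by positivity
  have htb : 0 < 1 + t * b := by positivity
  have hweight : min t b⁻¹ ≤ 2 * t / (1 + t * b) := by
    calc min t b⁻¹ = min (t * b) 1 / b := by
          rw [eq_div_iff hb.ne', min_mul_of_nonneg _ _ hb.le, inv_mul_cancel₀ hb.ne']
      _ ≤ 2 * (t * b) / (1 + t * b) / b := by
        gcongr; exact min_le_two_mul_div_one_add (mul_nonneg ht hb.le)
      _ = 2 * t / (1 + t * b) := by field_simp
  have hlog : t * (b - a) / (1 + t * b) ≤ log (1 + t * b) - log (1 + t * a) := by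
    have h := log_le_sub_one_of_pos (div_pos hta htb)
    have hquot : (1 + t * a) / (1 + t * b) - 1 = -(t * (b - a) / (1 + t * b)) := by
      field_simp
      ring
    rw [log_div hta.ne' htb.ne', hquot] at h
    linarith
  calc min t b⁻¹ * (b - a) ≤ 2 * t / (1 + t * b) * (b - a) := by gcongr
    _ = 2 * (t * (b - a) / (1 + t * b)) := by ring
    _ ≤ 2 * (log (1 + t * b) - log (1 + t * a)) := by gcongr

theorem sum_primesLE_min_mul_log_div_le {t : ℝ} (ht : 0 ≤ t) (n : ℕ) :
    ∑ p ∈ primesLE n, min (t * log p) 1 / p ≤ 6 * log (1 + t * log n) := by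
  -- `max i 2` keeps the weight antitone at `i = 0, 1`, where `log i = 0`.
  set w : ℕ → ℝ := fun i ↦ min t (log (max i 2 : ℕ))⁻¹ with hw_def
  -- `L (i + 1) = log i`, and truncated subtraction makes `L 0 = L 1 = 0`.
  set L : ℕ → ℝ := fun i ↦ log (i - 1 : ℕ) with hL_def
  have hw : Antitone w := fun i j hij ↦ by
    have hlog : (0 : ℝ) < log (max i 2 : ℕ) :=
      log_pos (by exact_mod_cast lt_max_of_lt_right one_lt_two)
    simp only [hw_def]
    gcongr
  have hsum_eq : ∑ p ∈ primesLE n, min (t * log p) 1 / p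
      = ∑ i ∈ range (n + 1), w i * if i.Prime then log i / i else 0 := by
    simp_rw [mul_ite, mul_zero, ← sum_filter, ← primesLE_eq_filter_range]
    refine sum_congr rfl fun p hp ↦ ?_
    have hp2 := (mem_primesLE.1 hp).2.two_le
    have hlog : 0 < log p := log_pos (by exact_mod_cast hp2)
    simp only [hw_def, max_eq_left hp2]
    rw [mul_div_assoc', min_mul_of_nonneg _ _ hlog.le, inv_mul_cancel₀ hlog.ne']
  have hpartial (k : ℕ) : ∑ i ∈ range k, (if i.Prime then log i / i else 0)
      ≤ ∑ i ∈ range k, (3 * L (i + 1) - 3 * L i) := by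
    rw [sum_range_sub (fun i ↦ 3 * L i)]
    cases k with
    | zero => simp
    | succ j =>
      rw [← sum_filter, ← primesLE_eq_filter_range]
      simpa [hL_def] using sum_primesLE_log_div_le_three_mul_log j
  have hterm (i : ℕ) : w i * (3 * L (i + 1) - 3 * L i)
      ≤ 6 * log (1 + t * L (i + 1)) - 6 * log (1 + t * L i) := by
    rcases lt_or_ge i 2 with hi | hi
    · interval_cases i <;> simp [hL_def]
    have h := min_mul_sub_le_two_mul_log_sub ht (log_natCast_nonneg (i - 1))
      (log_le_log (cast_pos.2 (by omega)) (cast_le.2 (sub_le i 1)))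
    simp only [hw_def, hL_def, max_eq_left hi, Nat.add_sub_cancel]
    linarith
  calc ∑ p ∈ primesLE n, min (t * log p) 1 / p
      = ∑ i ∈ range (n + 1), w i * if i.Prime then log i / i else 0 := hsum_eq
    _ ≤ ∑ i ∈ range (n + 1), w i * (3 * L (i + 1) - 3 * L i) :=
      sum_mul_le_sum_mul_of_antitone hw (by positivity) fun k _ ↦ hpartial k
    _ ≤ ∑ i ∈ range (n + 1), (6 * log (1 + t * L (i + 1)) - 6 * log (1 + t * L i)) :=
      sum_le_sum fun i _ ↦ hterm i
    _ = 6 * log (1 + t * log n) := by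
      rw [sum_range_sub (fun i ↦ 6 * log (1 + t * L i))]
      simp [hL_def]

/-- Mertens-type estimate: `∑_{p ≤ z} min(σ log_R p, 1)/p ≪ log(1 + σ log_R z)`
uniformly in `σ > 0` and `R, z ≥ 2`. -/
theorem stmt7 :
    ∃ C : ℝ, 0 < C ∧ ∀ σ R z : ℝ, 0 < σ → 2 ≤ R → 2 ≤ z →
      ∑ p ∈ (Finset.range (Nat.floor z + 1)).filter Nat.Prime,
          min (σ * Real.log p / Real.log R) 1 / (p : ℝ)
        ≤ C * Real.log (1 + σ * Real.log z / Real.log R) := by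
  refine ⟨6, by norm_num, fun σ R z hσ hR hz ↦ ?_⟩
  have hlogR : 0 < log R := log_pos (by linarith)
  have hfloor : (0 : ℝ) < ⌊z⌋₊ := cast_pos.2 (floor_pos.2 (by linarith))
  simp_rw [mul_div_right_comm σ, ← primesLE_eq_filter_range]
  calc ∑ p ∈ primesLE ⌊z⌋₊, min (σ / log R * log p) 1 / p
      ≤ 6 * log (1 + σ / log R * log ⌊z⌋₊) :=
        sum_primesLE_min_mul_log_div_le (by positivity) ⌊z⌋₊
    _ ≤ 6 * log (1 + σ / log R * log z) := by
        gcongr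
        exact floor_le (by linarith)
end

section
/- Let λ be the Liouville function and let λ_S be the completely multiplicative function agreeing with λ on primes p ≤ R and with χ (a real Dirichlet character) on primes p > R, where R ≥ 2. Then for every natural number n ≤ 2x (with x ≥ R²): |λ(n) − λ_S(n)| ≤ 2·(∑_{p | n, R < p ≤ x/R, χ(p) ≠ -1} 1 + ∑_{d | n, d ≤ 2R, n/d ≥ x/R} 1). -/
open Finset
open scoped Classical

/-- Error bound between the Liouville function `λ` and its Siegel model `λ_S` (the
completely multiplicative function agreeing with `λ` at primes `≤ R` and with a real
character `χ` at primes `> R`):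
`|λ(n) − λ_S(n)| ≤ 2(∑_{p∣n, R<p≤x/R, χ(p)≠-1} 1 + ∑_{d∣n, d≤2R, n/d≥x/R} 1)`
for all `n ≤ 2x`. -/
theorem stmt17 (q : ℕ) (χ : DirichletCharacter ℝ q) (R x : ℝ)
    (hR : 2 ≤ R) (hx : R ^ 2 ≤ x)
    (lamS : ℕ → ℝ)
    (hmul : ∀ m n : ℕ, lamS (m * n) = lamS m * lamS n) (hone : lamS 1 = 1)
    (hsmall : ∀ p : ℕ, p.Prime → (p : ℝ) ≤ R →
      lamS p = (-1 : ℝ) ^ p.primeFactorsList.length)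
    (hbig : ∀ p : ℕ, p.Prime → R < (p : ℝ) → lamS p = χ p)
    (n : ℕ) (hn : 0 < n) (hnx : (n : ℝ) ≤ 2 * x) :
    |(-1 : ℝ) ^ n.primeFactorsList.length - lamS n| ≤
      2 * (((n.primeFactors.filter
              (fun p : ℕ => R < (p : ℝ) ∧ (p : ℝ) ≤ x / R ∧ χ p ≠ -1)).card : ℝ)
         + ((n.divisors.filter
              (fun d : ℕ => (d : ℝ) ≤ 2 * R ∧ x / R ≤ ((n / d : ℕ) : ℝ))).card : ℝ)) := by
  have hchi : ∀ m : ℕ, |χ (m : ZMod q)| ≤ 1 := fun m => by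
    simpa [Real.norm_eq_abs] using DirichletCharacter.norm_le_one χ (m : ZMod q)
  -- |lamS m| ≤ 1 for all m > 0
  have habs : ∀ m : ℕ, 0 < m → |lamS m| ≤ 1 := by
    intro m
    induction m using Nat.strong_induction_on with
    | _ m ih =>
      intro hm
      rcases eq_or_ne m 1 with rfl | hm1
      · simp [hone]
      · have hp : m.minFac.Prime := Nat.minFac_prime hm1
        obtain ⟨k, hk⟩ := Nat.minFac_dvd m
        have hk0 : 0 < k := by
          rcases Nat.eq_zero_or_pos k with h | h
          · simp [h] at hk; omega
          · exact h
        have hkm : k < m := by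
          have := hp.two_le
          calc k < 2 * k := by omega
            _ ≤ m.minFac * k := by exact Nat.mul_le_mul_right k this
            _ = m := hk.symm
        have h1 : |lamS m.minFac| ≤ 1 := by
          rcases le_or_gt (m.minFac : ℝ) R with h | h
          · rw [hsmall _ hp h]; simp [abs_pow]
          · rw [hbig _ hp h]; exact hchi _
        have hsplit : lamS m = lamS m.minFac * lamS k := by rw [← hmul, ← hk]
        calc |lamS m| = |lamS m.minFac| * |lamS k| := by rw [hsplit, abs_mul]
          _ ≤ 1 * 1 := mul_le_mul h1 (ih k hkm hk0) (abs_nonneg _) zero_le_one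
          _ = 1 := by ring
  -- equality case
  have heq : ∀ m : ℕ, 0 < m → (∀ p : ℕ, p.Prime → p ∣ m → R < (p : ℝ) → χ (p : ZMod q) = -1) →
      lamS m = (-1 : ℝ) ^ m.primeFactorsList.length := by
    intro m
    induction m using Nat.strong_induction_on with
    | _ m ih =>
      intro hm hall
      rcases eq_or_ne m 1 with rfl | hm1
      · simp [hone]
      · have hp : m.minFac.Prime := Nat.minFac_prime hm1
        obtain ⟨k, hk⟩ := Nat.minFac_dvd m
        have hk0 : 0 < k := by
          rcases Nat.eq_zero_or_pos k with h | h
          · simp [h] at hk; omega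
          · exact h
        have hkm : k < m := by
          have := hp.two_le
          calc k < 2 * k := by omega
            _ ≤ m.minFac * k := by exact Nat.mul_le_mul_right k this
            _ = m := hk.symm
        have hlp : lamS m.minFac = -1 := by
          rcases le_or_gt (m.minFac : ℝ) R with h | h
          · rw [hsmall _ hp h, Nat.primeFactorsList_prime hp]; simp
          · exact (hbig _ hp h).trans (hall _ hp (Nat.minFac_dvd m) h)
        have hlen : m.primeFactorsList.length = k.primeFactorsList.length + 1 := by
          have hperm := Nat.perm_primeFactorsList_mul (a := m.minFac) (b := k)
            hp.pos.ne' hk0.ne'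
          rw [hk, hperm.length_eq, List.length_append, Nat.primeFactorsList_prime hp]
          simp [Nat.add_comm]
        have hrec := ih k hkm hk0 (fun r hr hd h => hall r hr (hk ▸ hd.mul_left m.minFac) h)
        rw [hk] at hlen ⊢
        rw [hmul, hlp, hrec, hlen, pow_succ]
        ring
  by_cases hcase : ∀ p : ℕ, p.Prime → p ∣ n → R < (p : ℝ) → χ (p : ZMod q) = -1
  · rw [heq n hn hcase]
    simp only [sub_self, abs_zero]
    positivity
  · push_neg at hcase
    obtain ⟨p, hp, hpd, hpR, hpchi⟩ := hcase
    have hLHS : |(-1 : ℝ) ^ n.primeFactorsList.length - lamS n| ≤ 2 := by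
      calc |(-1 : ℝ) ^ n.primeFactorsList.length - lamS n|
          ≤ |(-1 : ℝ) ^ n.primeFactorsList.length| + |lamS n| := abs_sub _ _
        _ ≤ 1 + 1 := by
            refine add_le_add (by simp [abs_pow]) (habs n hn)
        _ = 2 := by norm_num
    have hRpos : (0 : ℝ) < R := by linarith
    have hppos : (0 : ℝ) < (p : ℝ) := by
      exact_mod_cast hp.pos
    have hRHS : (1 : ℝ) ≤
        ((n.primeFactors.filter
            (fun p : ℕ => R < (p : ℝ) ∧ (p : ℝ) ≤ x / R ∧ χ p ≠ -1)).card : ℝ)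
        + ((n.divisors.filter
            (fun d : ℕ => (d : ℝ) ≤ 2 * R ∧ x / R ≤ ((n / d : ℕ) : ℝ))).card : ℝ) := by
      rcases le_or_gt (p : ℝ) (x / R) with h | h
      · have hmem : p ∈ n.primeFactors.filter
            (fun p : ℕ => R < (p : ℝ) ∧ (p : ℝ) ≤ x / R ∧ χ p ≠ -1) := by
          refine Finset.mem_filter.mpr ⟨Nat.mem_primeFactors.mpr ⟨hp, hpd, hn.ne'⟩, hpR, h, hpchi⟩
        have h1 : 1 ≤ (n.primeFactors.filter
            (fun p : ℕ => R < (p : ℝ) ∧ (p : ℝ) ≤ x / R ∧ χ p ≠ -1)).card :=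
          Finset.card_pos.mpr ⟨p, hmem⟩
        have h2 : (0 : ℝ) ≤ ((n.divisors.filter
            (fun d : ℕ => (d : ℝ) ≤ 2 * R ∧ x / R ≤ ((n / d : ℕ) : ℝ))).card : ℝ) := by
          positivity
        have := (Nat.one_le_cast (α := ℝ)).mpr h1
        linarith
      · -- d = n / p works
        have hdn : n / (n / p) = p := Nat.div_div_self hpd hn.ne'
        have hdd : n / p ∣ n := Nat.div_dvd_of_dvd hpd
        have hcast : ((n / p : ℕ) : ℝ) = (n : ℝ) / (p : ℝ) :=
          Nat.cast_div hpd (Nat.cast_ne_zero.mpr hp.pos.ne')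
        have hxle : x < R * (p : ℝ) := by
          have := (div_lt_iff₀ hRpos).mp h
          linarith
        have hdle : ((n / p : ℕ) : ℝ) ≤ 2 * R := by
          rw [hcast, div_le_iff₀ hppos]
          nlinarith
        have hmem : n / p ∈ n.divisors.filter
            (fun d : ℕ => (d : ℝ) ≤ 2 * R ∧ x / R ≤ ((n / d : ℕ) : ℝ)) := by
          refine Finset.mem_filter.mpr ⟨Nat.mem_divisors.mpr ⟨hdd, hn.ne'⟩, hdle, ?_⟩
          rw [hdn]
          exact h.le
        have h1 : 1 ≤ (n.divisors.filter
            (fun d : ℕ => (d : ℝ) ≤ 2 * R ∧ x / R ≤ ((n / d : ℕ) : ℝ))).card :=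
          Finset.card_pos.mpr ⟨n / p, hmem⟩
        have h2 : (0 : ℝ) ≤ ((n.primeFactors.filter
            (fun p : ℕ => R < (p : ℝ) ∧ (p : ℝ) ≤ x / R ∧ χ p ≠ -1)).card : ℝ) := by
          positivity
        have := (Nat.one_le_cast (α := ℝ)).mpr h1
        linarith
    linarith
end
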